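/- Any non-negative Borel measurable function w : Ω → ℝ can be written as w = Σ_{k=1}^{∞} (1/k) χ_{A_k} for some sequence of Borel sets (A_k)_{k∈ℕ}. -/
import Mathlib

open MeasureTheory Filter Topology

noncomputable def sAux {α : Type*} (w : α → ℝ) : ℕ → α → ℝ
  | 0 => fun _ => 0
  | k + 1 => fun x =>
      sAux w k x + (1 / (k + 1) : ℝ) *
        ({y | sAux w k y + 1 / (k + 1) ≤ w y}).indicator 1 x

def AAux {α : Type*} (w : α → ℝ) (k : ℕ) : Set α :=
  {y | sAux w k y + 1 / (k + 1) ≤ w y}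

lemma sAux_succ {α : Type*} (w : α → ℝ) (k : ℕ) (x : α) :
    sAux w (k + 1) x = sAux w k x + (1 / (k + 1) : ℝ) * (AAux w k).indicator 1 x := rfl

lemma sAux_measurable {α : Type*} [MeasurableSpace α] {w : α → ℝ} (hwm : Measurable w)
    (k : ℕ) : Measurable (sAux w k) := by
  induction k with
  | zero => exact measurable_const
  | succ k ih =>
    have hA : MeasurableSet {y | sAux w k y + 1 / (k + 1) ≤ w y} :=
      measurableSet_le (ih.add measurable_const) hwm
    exact ih.add (measurable_const.mul ((measurable_const.indicator hA)))

lemma AAux_measurable {α : Type*} [MeasurableSpace α] {w : α → ℝ} (hwm : Measurable w)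
    (k : ℕ) : MeasurableSet (AAux w k) :=
  measurableSet_le ((sAux_measurable hwm k).add measurable_const) hwm

lemma sAux_le {α : Type*} {w : α → ℝ} {x : α} (hx : 0 ≤ w x) (k : ℕ) :
    sAux w k x ≤ w x := by
  induction k with
  | zero => exact hx
  | succ k ih =>
    rw [sAux_succ]
    by_cases hA : x ∈ AAux w k
    · rw [Set.indicator_of_mem hA]
      have h2 : sAux w k x + 1 / (k + 1) ≤ w x := hA
      simpa using h2
    · rw [Set.indicator_of_notMem hA]
      simpa using ih

lemma sAux_mono {α : Type*} (w : α → ℝ) (x : α) : Monotone (fun k => sAux w k x) := by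
  apply monotone_nat_of_le_succ
  intro k
  rw [sAux_succ]
  have : (0:ℝ) ≤ (1 / (k + 1) : ℝ) * (AAux w k).indicator 1 x := by
    apply mul_nonneg (by positivity)
    exact Set.indicator_nonneg (fun _ _ => zero_le_one) x
  linarith

lemma sAux_tendsto {α : Type*} {w : α → ℝ} {x : α} (hx : 0 ≤ w x) :
    Tendsto (fun k => sAux w k x) atTop (𝓝 (w x)) := by
  have hbdd : BddAbove (Set.range fun k => sAux w k x) :=
    ⟨w x, by rintro _ ⟨k, rfl⟩; exact sAux_le hx k⟩
  have htend := tendsto_atTop_ciSup (sAux_mono w x) hbdd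
  set L := ⨆ k, sAux w k x with hL
  have hLle : L ≤ w x := ciSup_le fun k => sAux_le hx k
  rcases eq_or_lt_of_le hLle with h | h
  · rwa [h] at htend
  · exfalso
    -- pick K with 1/(K+1) < w x - L
    obtain ⟨K, hK⟩ := exists_nat_one_div_lt (sub_pos.mpr h)
    have hmem : ∀ k ≥ K, x ∈ AAux w k := by
      intro k hk
      have h1 : (1 / (k + 1) : ℝ) ≤ 1 / (K + 1) := by
        apply one_div_le_one_div_of_le (by positivity)
        have : (K:ℝ) ≤ k := Nat.cast_le.mpr hk
        linarith
      have h2 : sAux w k x ≤ L := le_ciSup hbdd k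
      show sAux w k x + 1 / (k + 1) ≤ w x
      have : (1 / (K + 1) : ℝ) < w x - L := hK
      linarith
    -- then sAux w (K+n) x = sAux w K x + ∑_{i<n} 1/(K+i+1)
    have hsum : ∀ n, sAux w K x + ∑ i ∈ Finset.range n, (1 / (K + i + 1) : ℝ)
        ≤ sAux w (K + n) x := by
      intro n
      induction n with
      | zero => simp
      | succ n ih =>
        have hx2 : x ∈ AAux w (K + n) := hmem _ (Nat.le_add_right K n)
        rw [Finset.sum_range_succ, show K + (n+1) = (K+n)+1 from rfl, sAux_succ,
          Set.indicator_of_mem hx2]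
        simp only [Pi.one_apply, mul_one]
        push_cast
        linarith
    -- compare with harmonic series
    have hdiv : Tendsto (fun n => ∑ i ∈ Finset.range n, (1 / (K + i + 1) : ℝ)) atTop atTop := by
      have hcomp : ∀ n, (1 / (K + 1) : ℝ) * ∑ i ∈ Finset.range n, (1 / (i + 1) : ℝ)
          ≤ ∑ i ∈ Finset.range n, (1 / (K + i + 1) : ℝ) := by
        intro n
        rw [Finset.mul_sum]
        apply Finset.sum_le_sum
        intro i _
        rw [div_mul_div_comm, one_mul]
        apply one_div_le_one_div_of_le (by positivity)
        have h1 : (0:ℝ) ≤ K := Nat.cast_nonneg K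
        have h2 : (0:ℝ) ≤ i := Nat.cast_nonneg i
        nlinarith
      exact tendsto_atTop_mono hcomp
        ((Real.tendsto_sum_range_one_div_nat_succ_atTop).const_mul_atTop (by positivity))
    have hunbdd : Tendsto (fun n => sAux w (K + n) x) atTop atTop :=
      tendsto_atTop_mono hsum (tendsto_atTop_add_const_left _ _ hdiv)
    have : ∀ n, sAux w (K + n) x ≤ w x := fun n => sAux_le hx _
    obtain ⟨n, hn⟩ := (hunbdd.eventually_gt_atTop (w x)).exists
    exact absurd (this n) (not_le.mpr hn)

/-- Any non-negative Borel measurable function `w : Ω → ℝ` can be written as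
`w = ∑_{k=1}^∞ (1/k) χ_{A_k}` pointwise on `Ω`, for some sequence of Borel sets `A_k`
(here indexed by `k : ℕ`, the set `A k` playing the role of `A_{k+1}`). -/
theorem nonneg_measurable_eq_tsum_indicator {N : ℕ}
    (Ω : Set (EuclideanSpace ℝ (Fin N)))
    (w : EuclideanSpace ℝ (Fin N) → ℝ) (hw : ∀ x, 0 ≤ w x) (hwm : Measurable w) :
    ∃ A : ℕ → Set (EuclideanSpace ℝ (Fin N)),
      (∀ k, MeasurableSet (A k)) ∧
      ∀ x ∈ Ω, HasSum (fun k : ℕ => (1 / (k + 1) : ℝ) * (A k).indicator 1 x) (w x) := by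
  refine ⟨AAux w, AAux_measurable hwm, fun x _ => ?_⟩
  have hnn : ∀ k : ℕ, 0 ≤ (1 / (k + 1) : ℝ) * (AAux w k).indicator 1 x := fun k =>
    mul_nonneg (by positivity) (Set.indicator_nonneg (fun _ _ => zero_le_one) x)
  rw [hasSum_iff_tendsto_nat_of_nonneg hnn]
  have hpsum : ∀ n, ∑ k ∈ Finset.range n, (1 / (k + 1) : ℝ) * (AAux w k).indicator 1 x
      = sAux w n x := by
    intro n
    induction n with
    | zero => simp [sAux]
    | succ n ih => rw [Finset.sum_range_succ, ih, sAux_succ]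
  simpa only [hpsum] using sAux_tendsto (hw x)
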